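/- arXiv:1301.5089 — 2 statements merged into one kernel-verified Lean document; each statement's English description precedes it below -/
import Mathlib

section
/- The four following schemas are intuitionistically equivalent (for any predicate A over a type α): (1) (∀ x, ¬¬A x) → ¬¬(∀ x, A x); (2) ¬(∀ x, A x) → ¬(∀ x, ¬¬A x); (3) ¬¬(∀ x, A x ∨ ¬A x); (4) ¬((∀ x, ¬¬A x) ∧ ¬(∀ x, A x)). That is, each pairwise implication among these four statements holds constructively (without using the law of excluded middle). -/
/-!
(2) and (4) are propositional rewritings of (1) for the same predicate. Applying (1) to the
predicate `x ↦ A x ∨ ¬A x`, all of whose instances are doubly negated excluded middle, gives (3);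
conversely, under `∀ x, A x ∨ ¬A x` each `¬¬A x` yields `A x`, so (3) gives (1).
-/

section DoubleNegationShift

variable {α : Sort*}

def DoubleNegationShift (A : α → Prop) : Prop :=
  (∀ x, ¬¬A x) → ¬¬∀ x, A x

theorem doubleNegationShift_iff_contrapositive (A : α → Prop) :
    DoubleNegationShift A ↔ (¬(∀ x, A x) → ¬∀ x, ¬¬A x) :=
  imp_not_comm

theorem doubleNegationShift_iff_not_and (A : α → Prop) :
    DoubleNegationShift A ↔ ¬((∀ x, ¬¬A x) ∧ ¬∀ x, A x) :=
  not_and.symm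

theorem not_not_forall_em_of_doubleNegationShift {A : α → Prop}
    (h : DoubleNegationShift fun x => A x ∨ ¬A x) : ¬¬∀ x, A x ∨ ¬A x :=
  h fun x => not_not_em (A x)

theorem doubleNegationShift_of_not_not_forall_em {A : α → Prop}
    (h : ¬¬∀ x, A x ∨ ¬A x) : DoubleNegationShift A :=
  fun hdn hn => h fun hem => hn fun x => (hem x).resolve_right (hdn x)

end DoubleNegationShift

theorem dns_four_equivalents (α : Type*) :
    ((∀ A : α → Prop, (∀ x, ¬¬A x) → ¬¬(∀ x, A x)) ↔
      (∀ A : α → Prop, ¬(∀ x, A x) → ¬(∀ x, ¬¬A x))) ∧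
    ((∀ A : α → Prop, (∀ x, ¬¬A x) → ¬¬(∀ x, A x)) ↔
      (∀ A : α → Prop, ¬¬(∀ x, A x ∨ ¬A x))) ∧
    ((∀ A : α → Prop, (∀ x, ¬¬A x) → ¬¬(∀ x, A x)) ↔
      (∀ A : α → Prop, ¬((∀ x, ¬¬A x) ∧ ¬(∀ x, A x)))) :=
  ⟨forall_congr' doubleNegationShift_iff_contrapositive,
    ⟨fun h A => not_not_forall_em_of_doubleNegationShift (h fun x => A x ∨ ¬A x),
      fun h A => doubleNegationShift_of_not_not_forall_em (h A)⟩,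
    forall_congr' doubleNegationShift_iff_not_and⟩
end

section
/- Glivenko-style property of the Kuroda translation in presence of DNS: assuming DNS at all relevant types (the schema (∀ x, ¬¬B x) → ¬¬(∀ x, B x) for all predicates B appearing), the double negation ¬¬⟦A⟧ of the interpretation of a formula A is constructively equivalent to the interpretation of its Kuroda translation ⟦A^⊥⟧. -/
inductive Fml (α : Type u) : Type (u + 1) where
  | atom : Prop → Fml α
  | bot : Fml α
  | conj : Fml α → Fml α → Fml α
  | disj : Fml α → Fml α → Fml α
  | imp : Fml α → Fml α → Fml α
  | all : (α → Fml α) → Fml α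
  | ex : (α → Fml α) → Fml α

def Fml.interp {α : Type u} : Fml α → Prop
  | atom P => P
  | bot => False
  | conj A B => A.interp ∧ B.interp
  | disj A B => A.interp ∨ B.interp
  | imp A B => A.interp → B.interp
  | all A => ∀ x, (A x).interp
  | ex A => ∃ x, (A x).interp

/-- The Kuroda translation `A ↦ A_⊥`. -/
def Fml.kuroda {α : Type u} : Fml α → Fml α
  | atom P => atom P
  | bot => bot
  | conj A B => conj A.kuroda B.kuroda
  | disj A B => disj A.kuroda B.kuroda
  | imp A B => imp A.kuroda (imp (imp B.kuroda bot) bot)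
  | all A => all fun x => imp (imp (A x).kuroda bot) bot
  | ex A => ex fun x => (A x).kuroda

/-!
Double negation is a nucleus on `Prop`: intuitionistically it commutes with `∧` and `→`, and
`¬¬(a ∨ b)`, `¬¬∃ x, p x` depend only on `¬a`, `¬b`, `¬p x`, which are determined by `¬¬a`,
`¬¬b`, `¬¬p x`. The one connective it does not commute with is `∀`, and that is exactly what DNS
supplies; the Kuroda translation puts `¬¬` under every `∀` and after every `→`, so that the
translated side never needs DNS.
-/

section DoubleNegation

variable {a b : Prop} {α : Sort*} {p : α → Prop}

theorem not_congr_of_not_not_iff (h : ¬¬a ↔ ¬¬b) : ¬a ↔ ¬b :=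
  not_not_not.symm.trans ((not_congr h).trans not_not_not)

theorem not_not_and_iff : ¬¬(a ∧ b) ↔ ¬¬a ∧ ¬¬b :=
  ⟨fun h => ⟨fun ha => h fun hab => ha hab.1, fun hb => h fun hab => hb hab.2⟩,
    fun ⟨ha, hb⟩ hn => ha fun a => hb fun b => hn ⟨a, b⟩⟩

theorem not_not_imp_iff : ¬¬(a → b) ↔ (¬¬a → ¬¬b) :=
  ⟨fun h ha hb => h fun hab => ha fun a => hb (hab a),
    fun h hn => hn fun a => (h (not_not_intro a) fun b => hn fun _ => b).elim⟩

theorem not_not_forall_not_not_iff : ¬¬(∀ x, ¬¬p x) ↔ ∀ x, ¬¬p x :=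
  ⟨fun h x hn => h fun hp => hp x hn, not_not_intro⟩

theorem not_not_forall_iff_of_dns (dns : (∀ x, ¬¬p x) → ¬¬∀ x, p x) :
    ¬¬(∀ x, p x) ↔ ∀ x, ¬¬p x :=
  ⟨fun h x hn => h fun hp => hn (hp x), dns⟩

end DoubleNegation

theorem kuroda_glivenko_of_dns {α : Type u}
    (dns : ∀ B : α → Prop, (∀ x, ¬¬B x) → ¬¬(∀ x, B x))
    (A : Fml α) :
    ¬¬A.interp ↔ ¬¬A.kuroda.interp := by
  induction A with
  | atom P => rfl
  | bot => rfl
  | conj A B ihA ihB =>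
    simp only [Fml.interp, Fml.kuroda, not_not_and_iff]
    exact and_congr ihA ihB
  | disj A B ihA ihB =>
    simp only [Fml.interp, Fml.kuroda, not_or]
    exact not_congr (and_congr (not_congr_of_not_not_iff ihA) (not_congr_of_not_not_iff ihB))
  | imp A B ihA ihB =>
    simp only [Fml.interp, Fml.kuroda, imp_false, not_not_imp_iff, not_not_not]
    exact imp_congr ihA ihB
  | all A ih =>
    simp only [Fml.interp, Fml.kuroda, imp_false]
    rw [not_not_forall_iff_of_dns (dns _), not_not_forall_not_not_iff]
    exact forall_congr' ih
  | ex A ih =>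
    simp only [Fml.interp, Fml.kuroda, not_exists]
    exact not_congr (forall_congr' fun x => not_congr_of_not_not_iff (ih x))
end
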